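/- arXiv:1612.00908 — 5 statements merged into one kernel-verified Lean document; each statement's English description precedes it below -/
import Mathlib

section
/- Tail bound lemma (axiomatic form). For every real ε > 0, real constant C' > 0 and natural numbers d ≥ 1 and s ≥ 1 there exists a real constant C such that the following holds. Let X be a set, H a finite set with |H| = n ≥ 1, for each a ∈ H let A_a ⊆ X, and let (T, I_H) be an abstract cell decomposition scheme for (H, (A_a)_{a ∈ H}) with parameters (C', d, s). Let r be a real number with 1 ≤ r ≤ (1−ε)·n, let μ be the Bernoulli(r/n) distribution on subsets of H, and let t ≥ 0 be a real number. Writing T(S)_{≥t} = {Δ ∈ T(S) : |I_H(Δ)| ≥ t·n/r}, one has Σ_{S ⊆ H} μ(S)·|T(S)_{≥t}| ≤ C·2^{−t}·r^d. -/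
/-!
Double counting turns the expectation into a sum over cells `Δ` of `Pr_p[Δ ∈ T S]`, `p = r / n`.
By the axioms, `Δ ∈ T S` iff `S` avoids `I Δ` and contains a defining set of `Δ`, so this
probability factors as `(1 - p) ^ |I Δ|` times the probability of an up-set generated by sets of
size at most `s`. Thinning the sample to `p / 4` loses at most a factor `4 ^ s` on the second
factor, while `1 - p ≤ (1 - p / 4) 2 ^ (-p)` bounds the first by `2 ^ (-t) (1 - p / 4) ^ |I Δ|`
as soon as `p |I Δ| ≥ t`. Summing back, the expectation is at most `4 ^ s 2 ^ (-t)` times the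
expected number of cells at `p / 4`, which is `O(r ^ d)` because the `d`-th moment of a binomial
variable with mean `r / 4` is.
-/

open scoped Classical

/-- An abstract cell decomposition scheme for `(H, (A a)_{a ∈ H})` with
parameters `(C', d, s)`:
* `T` assigns to each `S ⊆ H` a finite family `T S` of subsets of `X` whose
  union is `X`, with `|T S| ≤ C'·(|S|^d + 1)`;
* `I` assigns to each cell a subset `I Δ ⊆ H` containing every `a ∈ H` for
  which `A a` crosses `Δ` (for `Δ ∈ Reg = ⋃_{S ⊆ H} T S`);
* for every `S ⊆ H` and `Δ ∈ Reg`: `Δ ∈ T S` iff `I Δ ∩ S = ∅` and `S₀ ⊆ S`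
  for some defining set `S₀ ∈ D(Δ)`, where
  `D(Δ) = {S₀ ⊆ H : |S₀| ≤ s ∧ Δ ∈ T S₀}`. -/
structure ACDScheme {α X : Type} (H : Finset α) (A : α → Set X)
    (C' : ℝ) (d s : ℕ) where
  T : Finset α → Finset (Set X)
  I : Set X → Finset α
  covers : ∀ S ⊆ H, ∀ x : X, ∃ Δ ∈ T S, x ∈ Δ
  card_bound : ∀ S ⊆ H, ((T S).card : ℝ) ≤ C' * ((S.card : ℝ) ^ d + 1)
  I_subset : ∀ Δ : Set X, I Δ ⊆ H
  crosses_mem_I : ∀ S ⊆ H, ∀ Δ ∈ T S, ∀ a ∈ H,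
      (Δ ∩ A a).Nonempty → (Δ \ A a).Nonempty → a ∈ I Δ
  mem_T_iff : ∀ S' ⊆ H, ∀ Δ ∈ T S', ∀ S ⊆ H,
      (Δ ∈ T S ↔ (I Δ ∩ S = ∅ ∧ ∃ S₀ ⊆ S, S₀.card ≤ s ∧ Δ ∈ T S₀))

open Finset

theorem Nat.pow_le_two_pow_mul_descFactorial_add (m d : ℕ) :
    m ^ d ≤ 2 ^ d * m.descFactorial d + (2 * d) ^ d := by
  rcases lt_or_ge m (2 * d) with h | h
  · exact (Nat.pow_le_pow_left h.le d).trans (Nat.le_add_left _ _)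
  · calc m ^ d ≤ (2 * (m + 1 - d)) ^ d := Nat.pow_le_pow_left (by omega) d
      _ = 2 ^ d * (m + 1 - d) ^ d := Nat.mul_pow _ _ _
      _ ≤ 2 ^ d * m.descFactorial d := Nat.mul_le_mul_left _ (Nat.pow_sub_le_descFactorial m d)
      _ ≤ _ := Nat.le_add_right _ _

section Bernoulli

variable {α : Type*}

def bernoulliWeight (K : Finset α) (p : ℝ) (S : Finset α) : ℝ :=
  p ^ S.card * (1 - p) ^ (K.card - S.card)

theorem bernoulliWeight_nonneg (K : Finset α) {p : ℝ} (hp₀ : 0 ≤ p) (hp₁ : p ≤ 1)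
    (S : Finset α) : 0 ≤ bernoulliWeight K p S :=
  mul_nonneg (pow_nonneg hp₀ _) (pow_nonneg (sub_nonneg.2 hp₁) _)

theorem sum_bernoulliWeight (K : Finset α) (p : ℝ) :
    ∑ S ∈ K.powerset, bernoulliWeight K p S = 1 := by
  simp only [bernoulliWeight, sum_pow_mul_eq_add_pow, add_sub_cancel, one_pow]

theorem bernoulliWeight_of_subset_sdiff {K J R : Finset α} (hJ : J ⊆ K) (hR : R ⊆ K \ J)
    (p : ℝ) : bernoulliWeight K p R = (1 - p) ^ J.card * bernoulliWeight (K \ J) p R := by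
  have hRc : R.card ≤ (K \ J).card := card_le_card hR
  rw [card_sdiff_of_subset hJ] at hRc
  have hJc : J.card ≤ K.card := card_le_card hJ
  rw [bernoulliWeight, bernoulliWeight, card_sdiff_of_subset hJ,
    show K.card - R.card = J.card + (K.card - J.card - R.card) by omega, pow_add]
  ring

theorem sum_supset_pow_mul_pow_mul_pow {W K : Finset α} (hWK : W ⊆ K) (a b e : ℝ) :
    ∑ S ∈ K.powerset with W ⊆ S, a ^ S.card * b ^ (K.card - S.card) * e ^ (S.card - W.card)
      = a ^ W.card * (a * e + b) ^ (K.card - W.card) := by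
  rw [← card_sdiff_of_subset hWK, ← sum_pow_mul_eq_add_pow, mul_sum]
  refine sum_nbij' (· \ W) (· ∪ W) ?_ ?_ ?_ ?_ ?_
  · intro S hS
    simp only [mem_filter, mem_powerset] at hS ⊢
    exact sdiff_subset_sdiff hS.1 le_rfl
  · intro V hV
    simp only [mem_powerset, mem_filter, subset_sdiff] at hV ⊢
    exact ⟨union_subset hV.1 hWK, subset_union_right⟩
  · intro S hS
    simp only [mem_filter, mem_powerset] at hS
    exact sdiff_union_of_subset hS.2
  · intro V hV
    simp only [mem_powerset, subset_sdiff] at hV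
    exact union_sdiff_cancel_right hV.2
  · intro S hS
    simp only [mem_filter, mem_powerset] at hS
    have hWS := card_le_card hS.2
    have hSK := card_le_card hS.1
    rw [card_sdiff_of_subset hS.2, card_sdiff_of_subset hWK,
      show K.card - W.card - (S.card - W.card) = K.card - S.card by omega, mul_pow,
      ← Nat.add_sub_of_le hWS, pow_add, Nat.add_sub_cancel_left, Nat.add_sub_of_le hWS]
    ring

theorem sum_supset_bernoulliWeight {W K : Finset α} (hWK : W ⊆ K) (p : ℝ) :
    ∑ S ∈ K.powerset with W ⊆ S, bernoulliWeight K p S = p ^ W.card := by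
  simpa [bernoulliWeight] using sum_supset_pow_mul_pow_mul_pow hWK p (1 - p) 1

theorem bernoulliWeight_mul_eq_sum_supset {R K : Finset α} (hRK : R ⊆ K) (p c : ℝ) :
    bernoulliWeight K (c * p) R
      = ∑ U ∈ K.powerset with R ⊆ U, bernoulliWeight K p U * bernoulliWeight U c R := by
  have h := sum_supset_pow_mul_pow_mul_pow hRK p (1 - p) (1 - c)
  rw [show p * (1 - c) + (1 - p) = 1 - c * p by ring] at h
  rw [bernoulliWeight, mul_pow, mul_assoc, ← h, mul_sum]
  refine sum_congr rfl fun U _ => ?_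
  rw [bernoulliWeight, bernoulliWeight]
  ring

section UpwardClosed

variable {s : ℕ} {Q : Finset α → Prop}

theorem pow_le_sum_bernoulliWeight_of_witness (hQ : ∀ ⦃W R⦄, W ⊆ R → Q W → Q R)
    {U W : Finset α} (hWU : W ⊆ U) (hWs : W.card ≤ s) (hW : Q W) {c : ℝ} (hc₀ : 0 ≤ c)
    (hc₁ : c ≤ 1) : c ^ s ≤ ∑ R ∈ U.powerset with Q R, bernoulliWeight U c R :=
  calc c ^ s ≤ c ^ W.card := pow_le_pow_of_le_one hc₀ hc₁ hWs
    _ = ∑ R ∈ U.powerset with W ⊆ R, bernoulliWeight U c R :=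
      (sum_supset_bernoulliWeight hWU c).symm
    _ ≤ ∑ R ∈ U.powerset with Q R, bernoulliWeight U c R :=
      sum_le_sum_of_subset_of_nonneg (monotone_filter_right _ fun _ _ hWR => hQ hWR hW)
        fun R _ _ => bernoulliWeight_nonneg U hc₀ hc₁ R

/-- Thinning: a `Bernoulli(c p)` sample is a `Bernoulli(p)` sample `U` in which every point is
kept independently with probability `c`, and if `U` contains a witness of size at most `s`, that
witness survives with probability at least `c ^ s`. -/
theorem pow_mul_sum_bernoulliWeight_le (hQ : ∀ ⦃W R⦄, W ⊆ R → Q W → Q R)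
    (hQs : ∀ ⦃U⦄, Q U → ∃ W ⊆ U, W.card ≤ s ∧ Q W) (K : Finset α) {p c : ℝ}
    (hp₀ : 0 ≤ p) (hp₁ : p ≤ 1) (hc₀ : 0 ≤ c) (hc₁ : c ≤ 1) :
    c ^ s * ∑ R ∈ K.powerset with Q R, bernoulliWeight K p R
      ≤ ∑ R ∈ K.powerset with Q R, bernoulliWeight K (c * p) R := by
  calc c ^ s * ∑ R ∈ K.powerset with Q R, bernoulliWeight K p R
      = ∑ U ∈ K.powerset with Q U, bernoulliWeight K p U * c ^ s := by
        rw [mul_sum]; exact sum_congr rfl fun _ _ => mul_comm _ _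
    _ ≤ ∑ U ∈ K.powerset, bernoulliWeight K p U *
          ∑ R ∈ U.powerset with Q R, bernoulliWeight U c R := by
        rw [sum_filter]
        refine sum_le_sum fun U _ => ?_
        have hU := bernoulliWeight_nonneg K hp₀ hp₁ U
        split_ifs with hQU
        · obtain ⟨W, hWU, hWs, hW⟩ := hQs hQU
          exact mul_le_mul_of_nonneg_left
            (pow_le_sum_bernoulliWeight_of_witness hQ hWU hWs hW hc₀ hc₁) hU
        · exact mul_nonneg hU (sum_nonneg fun R _ => bernoulliWeight_nonneg U hc₀ hc₁ R)
    _ = ∑ R ∈ K.powerset with Q R, ∑ U ∈ K.powerset with R ⊆ U,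
          bernoulliWeight K p U * bernoulliWeight U c R := by
        simp_rw [mul_sum]
        refine sum_comm' fun U R => ?_
        simp only [mem_filter, mem_powerset]
        exact ⟨fun ⟨hU, hRU, hR⟩ => ⟨⟨hU, hRU⟩, hRU.trans hU, hR⟩,
          fun ⟨⟨hU, hRU⟩, _, hR⟩ => ⟨hU, hRU, hR⟩⟩
    _ = ∑ R ∈ K.powerset with Q R, bernoulliWeight K (c * p) R := by
        refine sum_congr rfl fun R hR => ?_
        rw [bernoulliWeight_mul_eq_sum_supset (mem_powerset.1 (mem_filter.1 hR).1)]

end UpwardClosed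

theorem sum_bernoulliWeight_mul_choose (K : Finset α) (p : ℝ) (d : ℕ) :
    ∑ S ∈ K.powerset, bernoulliWeight K p S * (S.card.choose d : ℝ)
      = (K.card.choose d : ℝ) * p ^ d := by
  calc ∑ S ∈ K.powerset, bernoulliWeight K p S * (S.card.choose d : ℝ)
      = ∑ S ∈ K.powerset, ∑ W ∈ K.powersetCard d with W ⊆ S, bernoulliWeight K p S := by
        refine sum_congr rfl fun S hS => ?_
        rw [sum_const, nsmul_eq_mul, mul_comm, ← card_powersetCard]
        congr 3
        ext W
        simp only [mem_filter, mem_powersetCard]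
        exact ⟨fun h => ⟨⟨h.1.trans (mem_powerset.1 hS), h.2⟩, h.1⟩,
          fun h => ⟨h.2, h.1.2⟩⟩
    _ = ∑ W ∈ K.powersetCard d, ∑ S ∈ K.powerset with W ⊆ S, bernoulliWeight K p S := by
        refine sum_comm' fun S W => ?_
        simp only [mem_filter, mem_powerset, mem_powersetCard]
        tauto
    _ = (K.card.choose d : ℝ) * p ^ d := by
        rw [← card_powersetCard, ← nsmul_eq_mul, ← sum_const]
        refine sum_congr rfl fun W hW => ?_
        rw [mem_powersetCard] at hW
        rw [sum_supset_bernoulliWeight hW.1, hW.2]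

theorem sum_bernoulliWeight_mul_card_pow_le (K : Finset α) {p : ℝ} (hp₀ : 0 ≤ p)
    (hp₁ : p ≤ 1) (d : ℕ) :
    ∑ S ∈ K.powerset, bernoulliWeight K p S * (S.card : ℝ) ^ d
      ≤ (2 * K.card * p) ^ d + (2 * d) ^ d := by
  have hpow (m : ℕ) : (m : ℝ) ^ d ≤ 2 ^ d * d.factorial * m.choose d + (2 * d) ^ d := by
    have := Nat.pow_le_two_pow_mul_descFactorial_add m d
    rw [Nat.descFactorial_eq_factorial_mul_choose] at this
    exact_mod_cast (by simpa [mul_assoc] using this)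
  have hK : (d.factorial : ℝ) * K.card.choose d ≤ (K.card : ℝ) ^ d := by
    exact_mod_cast Nat.descFactorial_eq_factorial_mul_choose K.card d ▸
      Nat.descFactorial_le_pow K.card d
  calc ∑ S ∈ K.powerset, bernoulliWeight K p S * (S.card : ℝ) ^ d
      ≤ ∑ S ∈ K.powerset, bernoulliWeight K p S *
          (2 ^ d * d.factorial * S.card.choose d + (2 * d) ^ d) :=
        sum_le_sum fun S _ =>
          mul_le_mul_of_nonneg_left (hpow _) (bernoulliWeight_nonneg K hp₀ hp₁ S)
    _ = 2 ^ d * p ^ d * (d.factorial * K.card.choose d) + (2 * d) ^ d := by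
        simp only [mul_add, sum_add_distrib, ← sum_mul, sum_bernoulliWeight,
          mul_left_comm _ (2 ^ d * _ : ℝ), ← mul_sum, sum_bernoulliWeight_mul_choose]
        ring
    _ ≤ 2 ^ d * p ^ d * (K.card : ℝ) ^ d + (2 * d) ^ d := by gcongr
    _ = (2 * K.card * p) ^ d + (2 * d) ^ d := by ring

end Bernoulli

theorem one_sub_le_one_sub_div_four_mul_two_rpow_neg {p : ℝ} (hp₀ : 0 ≤ p) (hp₄ : p ≤ 4) :
    1 - p ≤ (1 - p / 4) * 2 ^ (-p) := by
  have hexp : 1 - p * Real.log 2 ≤ 2 ^ (-p) := by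
    rw [Real.rpow_def_of_pos two_pos]
    linarith [Real.add_one_le_exp (Real.log 2 * -p)]
  have hlog : Real.log 2 < 3 / 4 := Real.log_two_lt_d9.trans (by norm_num)
  have hlog₀ : 0 ≤ Real.log 2 := Real.log_nonneg (by norm_num)
  calc 1 - p ≤ (1 - p / 4) * (1 - p * Real.log 2) := by nlinarith [mul_nonneg hp₀ hp₀]
    _ ≤ (1 - p / 4) * 2 ^ (-p) := mul_le_mul_of_nonneg_left hexp (by linarith)

theorem one_sub_pow_le_two_rpow_neg_mul {p t : ℝ} {m : ℕ} (hp₀ : 0 ≤ p) (hp₁ : p ≤ 1)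
    (ht : t ≤ p * m) : (1 - p) ^ m ≤ 2 ^ (-t) * (1 - p / 4) ^ m :=
  calc (1 - p) ^ m ≤ ((1 - p / 4) * 2 ^ (-p)) ^ m :=
        pow_le_pow_left₀ (by linarith)
          (one_sub_le_one_sub_div_four_mul_two_rpow_neg hp₀ (by linarith)) m
    _ = 2 ^ (-(p * m)) * (1 - p / 4) ^ m := by
        rw [mul_pow, ← Real.rpow_natCast (2 ^ (-p)), ← Real.rpow_mul zero_le_two, mul_comm,
          neg_mul]
    _ ≤ 2 ^ (-t) * (1 - p / 4) ^ m := by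
        gcongr
        · exact pow_nonneg (by linarith) m
        · norm_num

theorem Finset.sum_mul_card_filter_eq {ι β : Type*} [DecidableEq β] (𝒮 : Finset ι)
    (T : ι → Finset β) (w : ι → ℝ) (P : β → Prop) [DecidablePred P] :
    ∑ S ∈ 𝒮, w S * ((T S).filter P).card
      = ∑ Δ ∈ 𝒮.biUnion T with P Δ, ∑ S ∈ 𝒮 with Δ ∈ T S, w S := by
  calc ∑ S ∈ 𝒮, w S * ((T S).filter P).card
      = ∑ S ∈ 𝒮, ∑ _Δ ∈ (T S).filter P, w S := by
        simp only [sum_const, nsmul_eq_mul, mul_comm]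
    _ = _ := sum_comm' fun S Δ => by
        simp only [mem_filter, mem_biUnion]
        exact ⟨fun ⟨hS, hΔ, hP⟩ => ⟨⟨hS, hΔ⟩, ⟨S, hS, hΔ⟩, hP⟩,
          fun ⟨⟨hS, hΔ⟩, _, hP⟩ => ⟨hS, hΔ, hP⟩⟩

namespace ACDScheme

variable {α X : Type} {H : Finset α} {A : α → Set X} {C' : ℝ} {d s : ℕ}
  (𝒯 : ACDScheme H A C' d s)

noncomputable def cells : Finset (Set X) := H.powerset.biUnion 𝒯.T

noncomputable def cellProb (p : ℝ) (Δ : Set X) : ℝ :=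
  ∑ S ∈ H.powerset with Δ ∈ 𝒯.T S, bernoulliWeight H p S

def ContainsDefiningSet (Δ : Set X) (R : Finset α) : Prop :=
  ∃ S₀ ⊆ R, S₀.card ≤ s ∧ Δ ∈ 𝒯.T S₀

theorem sum_bernoulliWeight_mul_card_filter (p : ℝ) (P : Set X → Prop) [DecidablePred P] :
    ∑ S ∈ H.powerset, bernoulliWeight H p S * ((𝒯.T S).filter P).card
      = ∑ Δ ∈ 𝒯.cells with P Δ, 𝒯.cellProb p Δ :=
  Finset.sum_mul_card_filter_eq _ _ _ P

theorem filter_powerset_mem_T {Δ : Set X} (hΔ : Δ ∈ 𝒯.cells) :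
    H.powerset.filter (Δ ∈ 𝒯.T ·)
      = (H \ 𝒯.I Δ).powerset.filter (𝒯.ContainsDefiningSet Δ) := by
  obtain ⟨S', hS', hΔS'⟩ := mem_biUnion.1 hΔ
  ext S
  simp only [mem_filter, mem_powerset, subset_sdiff]
  constructor
  · rintro ⟨hS, hΔS⟩
    obtain ⟨hI, hD⟩ := (𝒯.mem_T_iff S' (mem_powerset.1 hS') Δ hΔS' S hS).1 hΔS
    exact ⟨⟨hS, (disjoint_iff_inter_eq_empty.2 hI).symm⟩, hD⟩
  · rintro ⟨⟨hS, hdisj⟩, hD⟩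
    exact ⟨hS, (𝒯.mem_T_iff S' (mem_powerset.1 hS') Δ hΔS' S hS).2
      ⟨disjoint_iff_inter_eq_empty.1 hdisj.symm, hD⟩⟩

theorem cellProb_eq {Δ : Set X} (hΔ : Δ ∈ 𝒯.cells) (p : ℝ) :
    𝒯.cellProb p Δ = (1 - p) ^ (𝒯.I Δ).card *
      ∑ R ∈ (H \ 𝒯.I Δ).powerset with 𝒯.ContainsDefiningSet Δ R,
        bernoulliWeight (H \ 𝒯.I Δ) p R := by
  rw [cellProb, 𝒯.filter_powerset_mem_T hΔ, mul_sum]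
  refine sum_congr rfl fun R hR => ?_
  exact bernoulliWeight_of_subset_sdiff (𝒯.I_subset Δ) (mem_powerset.1 (mem_filter.1 hR).1) p

theorem cellProb_le {Δ : Set X} (hΔ : Δ ∈ 𝒯.cells) {p t : ℝ} (hp₀ : 0 ≤ p) (hp₁ : p ≤ 1)
    (ht : t ≤ p * (𝒯.I Δ).card) :
    𝒯.cellProb p Δ ≤ 4 ^ s * 2 ^ (-t) * 𝒯.cellProb (p / 4) Δ := by
  set K := H \ 𝒯.I Δ
  have hmono : ∀ ⦃W R⦄, W ⊆ R → 𝒯.ContainsDefiningSet Δ W → 𝒯.ContainsDefiningSet Δ R :=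
    fun _ _ hWR ⟨S₀, hS₀, hs, hT⟩ => ⟨S₀, hS₀.trans hWR, hs, hT⟩
  have hwit : ∀ ⦃U⦄, 𝒯.ContainsDefiningSet Δ U → ∃ W ⊆ U, W.card ≤ s ∧
      𝒯.ContainsDefiningSet Δ W :=
    fun _ ⟨S₀, hS₀, hs, hT⟩ => ⟨S₀, hS₀, hs, S₀, subset_rfl, hs, hT⟩
  have hthin := pow_mul_sum_bernoulliWeight_le hmono hwit K hp₀ hp₁
    (by norm_num : (0 : ℝ) ≤ 1 / 4) (by norm_num)
  rw [one_div, inv_pow, inv_mul_eq_div, div_le_iff₀ (by positivity), inv_mul_eq_div] at hthin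
  rw [𝒯.cellProb_eq hΔ, 𝒯.cellProb_eq hΔ]
  calc (1 - p) ^ (𝒯.I Δ).card *
        ∑ R ∈ K.powerset with 𝒯.ContainsDefiningSet Δ R, bernoulliWeight K p R
      ≤ (2 ^ (-t) * (1 - p / 4) ^ (𝒯.I Δ).card) *
        ((∑ R ∈ K.powerset with 𝒯.ContainsDefiningSet Δ R, bernoulliWeight K (p / 4) R) * 4 ^ s) :=
        mul_le_mul (one_sub_pow_le_two_rpow_neg_mul hp₀ hp₁ ht) hthin
          (sum_nonneg fun R _ => bernoulliWeight_nonneg K hp₀ hp₁ R)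
          (mul_nonneg (by positivity) (pow_nonneg (by linarith) _))
    _ = _ := by ring

theorem cellProb_nonneg {p : ℝ} (hp₀ : 0 ≤ p) (hp₁ : p ≤ 1) (Δ : Set X) :
    0 ≤ 𝒯.cellProb p Δ :=
  sum_nonneg fun S _ => bernoulliWeight_nonneg H hp₀ hp₁ S

theorem sum_bernoulliWeight_mul_card_filter_le {p : ℝ} (hp₀ : 0 < p) (hp₁ : p ≤ 1) (t : ℝ) :
    ∑ S ∈ H.powerset, bernoulliWeight H p S *
        ((𝒯.T S).filter fun Δ => t / p ≤ ((𝒯.I Δ).card : ℝ)).card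
      ≤ 4 ^ s * 2 ^ (-t) * ∑ S ∈ H.powerset, bernoulliWeight H (p / 4) S * (𝒯.T S).card := by
  have hq₀ : 0 ≤ p / 4 := by positivity
  have hq₁ : p / 4 ≤ 1 := by linarith
  have htotal := 𝒯.sum_bernoulliWeight_mul_card_filter (p / 4) fun _ => True
  simp only [filter_true] at htotal
  rw [𝒯.sum_bernoulliWeight_mul_card_filter, htotal, mul_sum]
  calc ∑ Δ ∈ 𝒯.cells with t / p ≤ ((𝒯.I Δ).card : ℝ), 𝒯.cellProb p Δ
      ≤ ∑ Δ ∈ 𝒯.cells with t / p ≤ ((𝒯.I Δ).card : ℝ),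
          4 ^ s * 2 ^ (-t) * 𝒯.cellProb (p / 4) Δ := by
        refine sum_le_sum fun Δ hΔ => ?_
        rw [mem_filter, div_le_iff₀ hp₀, mul_comm] at hΔ
        exact 𝒯.cellProb_le hΔ.1 hp₀.le hp₁ hΔ.2
    _ ≤ ∑ Δ ∈ 𝒯.cells, 4 ^ s * 2 ^ (-t) * 𝒯.cellProb (p / 4) Δ :=
        sum_le_sum_of_subset_of_nonneg (filter_subset _ _) fun Δ _ _ =>
          mul_nonneg (by positivity) (𝒯.cellProb_nonneg hq₀ hq₁ Δ)

theorem sum_bernoulliWeight_mul_card_le (hC' : 0 ≤ C') {q : ℝ} (hq₀ : 0 ≤ q) (hq₁ : q ≤ 1) :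
    ∑ S ∈ H.powerset, bernoulliWeight H q S * (𝒯.T S).card
      ≤ C' * ((2 * H.card * q) ^ d + (2 * d) ^ d + 1) :=
  calc ∑ S ∈ H.powerset, bernoulliWeight H q S * (𝒯.T S).card
      ≤ ∑ S ∈ H.powerset, bernoulliWeight H q S * (C' * ((S.card : ℝ) ^ d + 1)) :=
        sum_le_sum fun S hS => mul_le_mul_of_nonneg_left
          (𝒯.card_bound S (mem_powerset.1 hS)) (bernoulliWeight_nonneg H hq₀ hq₁ S)
    _ = C' * (∑ S ∈ H.powerset, bernoulliWeight H q S * (S.card : ℝ) ^ d + 1) := by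
        simp only [mul_add, mul_one, sum_add_distrib, mul_left_comm _ C', ← mul_sum, ← sum_mul,
          sum_bernoulliWeight, one_mul]
    _ ≤ C' * ((2 * H.card * q) ^ d + (2 * d) ^ d + 1) := by
        gcongr
        exact sum_bernoulliWeight_mul_card_pow_le H hq₀ hq₁ d

end ACDScheme

theorem tail_bound_lemma_general (ε : ℝ) (hε : 0 < ε) (C' : ℝ) (hC' : 0 < C')
    (d s : ℕ) :
    ∃ C : ℝ, ∀ (α X : Type) (H : Finset α) (A : α → Set X)
      (𝒯 : ACDScheme H A C' d s), 1 ≤ H.card →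
      ∀ r : ℝ, 1 ≤ r → r ≤ (1 - ε) * (H.card : ℝ) →
      ∀ t : ℝ, 0 ≤ t →
      ∑ S ∈ H.powerset,
          (r / (H.card : ℝ)) ^ S.card * (1 - r / (H.card : ℝ)) ^ (H.card - S.card) *
            (((𝒯.T S).filter
              (fun Δ => t * (H.card : ℝ) / r ≤ ((𝒯.I Δ).card : ℝ))).card : ℝ)
        ≤ C * (2 : ℝ) ^ (-t) * r ^ d := by
  refine ⟨4 ^ s * C' * ((2 * d) ^ d + 2), fun α X H A 𝒯 hn r hr₁ hrn t _ => ?_⟩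
  have hn₀ : (0 : ℝ) < H.card := by exact_mod_cast hn
  have hp₀ : 0 < r / H.card := by positivity
  have hp₁ : r / H.card ≤ 1 := by rw [div_le_one hn₀]; nlinarith
  have hq : 2 * H.card * (r / H.card / 4) = r / 2 := by field_simp; ring
  have hr : (r / 2) ^ d + (2 * d) ^ d + 1 ≤ ((2 * d) ^ d + 2) * r ^ d := by
    have hrd : 1 ≤ r ^ d := one_le_pow₀ hr₁
    have : (r / 2) ^ d ≤ r ^ d := pow_le_pow_left₀ (by positivity) (by linarith) d
    nlinarith [pow_nonneg (by positivity : (0 : ℝ) ≤ 2 * d) d]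
  rw [show t * H.card / r = t / (r / H.card) by field_simp]
  calc _ ≤ 4 ^ s * 2 ^ (-t) * ∑ S ∈ H.powerset,
          bernoulliWeight H (r / H.card / 4) S * (𝒯.T S).card :=
        𝒯.sum_bernoulliWeight_mul_card_filter_le hp₀ hp₁ t
    _ ≤ 4 ^ s * 2 ^ (-t) * (C' * ((r / 2) ^ d + (2 * d) ^ d + 1)) := by
        rw [← hq]
        gcongr
        exact 𝒯.sum_bernoulliWeight_mul_card_le hC'.le (by positivity) (by linarith)
    _ ≤ 4 ^ s * 2 ^ (-t) * (C' * (((2 * d) ^ d + 2) * r ^ d)) := by gcongr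
    _ = 4 ^ s * C' * ((2 * d) ^ d + 2) * 2 ^ (-t) * r ^ d := by ring

/-- **Tail bound lemma (axiomatic form).** For every `ε > 0`, `C' > 0`, `d ≥ 1`,
`s ≥ 1` there is a constant `C` such that for every abstract cell decomposition
scheme with parameters `(C', d, s)` over `(H, (A a))` with `|H| = n ≥ 1`, every
real `1 ≤ r ≤ (1-ε)·n`, and every real `t ≥ 0`, the expectation under the
Bernoulli(`r/n`) distribution on subsets `S ⊆ H` of the number of cells
`Δ ∈ T S` with `|I Δ| ≥ t·n/r` is at most `C·2^(−t)·r^d`. -/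
theorem tail_bound_lemma (ε : ℝ) (hε : 0 < ε) (C' : ℝ) (hC' : 0 < C')
    (d s : ℕ) (hd : 1 ≤ d) (hs : 1 ≤ s) :
    ∃ C : ℝ, ∀ (α X : Type) (H : Finset α) (A : α → Set X)
      (𝒯 : ACDScheme H A C' d s), 1 ≤ H.card →
      ∀ r : ℝ, 1 ≤ r → r ≤ (1 - ε) * (H.card : ℝ) →
      ∀ t : ℝ, 0 ≤ t →
      ∑ S ∈ H.powerset,
          (r / (H.card : ℝ)) ^ S.card * (1 - r / (H.card : ℝ)) ^ (H.card - S.card) *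
            (((𝒯.T S).filter
              (fun Δ => t * (H.card : ℝ) / r ≤ ((𝒯.I Δ).card : ℝ))).card : ℝ)
        ≤ C * (2 : ℝ) ^ (-t) * r ^ d :=
  tail_bound_lemma_general ε hε C' hC' d s
end

section
/- Suboptimal cutting lemma (axiomatic form). For every real constant C' > 0 and natural numbers d ≥ 1 and s ≥ 1 there exists a real constant K such that the following holds. Let X be a set, H a finite set with |H| = n ≥ 1, for each a ∈ H let A_a ⊆ X, and let (T, I_H) be an abstract cell decomposition scheme for (H, (A_a)_{a ∈ H}) with parameters (C', d, s). Then for every real number r with 1 < r < n there exists a subset S ⊆ H such that |T(S)| ≤ K·r^d·(log(r+1))^d and every Δ ∈ T(S) is crossed by at most n/r of the sets A_a (a ∈ H). -/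
open scoped Classical

/-! Random sampling. Put `t = c r log (r + 1)` for a constant `c` depending only on `C'`, `d`,
`s`; if `t ≥ n` take `S = H`, whose cells are crossed by nothing. Otherwise keep each element of
`H` independently with probability `p = t / n`. The sample has expected size `t`, so by Markov's
inequality it has size `< 3t` with probability `≥ 2/3`, and then `|T S| = O((r log (r + 1))^d)`.
A cell `Δ` crossed by more than `n / r` sets lies in `T S` only if one of its defining sets `S₀`
(`|S₀| ≤ s`) lies in `S` and `S` misses `I Δ`, which happens with probability
`p^|S₀| (1 - p)^|I Δ| ≤ p^|S₀| (r + 1)^(-c)`. Summing over the defining sets, the expected number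
of such cells is `O(t^s (r + 1)^(-c)) ≤ 1/3` once `c` is large, so some sample is good on both
counts. -/

open Finset Real Filter Topology

section BinomialWeight

variable {α : Type*} {H S₀ U : Finset α} {p : ℝ}

/-- The probability of drawing exactly `S` when each element of `H` is kept independently with
probability `p`. -/
def binomialWeight (H : Finset α) (p : ℝ) (S : Finset α) : ℝ :=
  p ^ #S * (1 - p) ^ (#H - #S)

theorem binomialWeight_nonneg (hp0 : 0 ≤ p) (hp1 : p ≤ 1) (S : Finset α) :
    0 ≤ binomialWeight H p S :=
  mul_nonneg (pow_nonneg hp0 _) (pow_nonneg (sub_nonneg.2 hp1) _)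

theorem sum_binomialWeight_powerset : ∑ S ∈ H.powerset, binomialWeight H p S = 1 := by
  simp only [binomialWeight, sum_pow_mul_eq_add_pow, add_sub_cancel, one_pow]

theorem sum_binomialWeight_Icc (hS₀U : S₀ ⊆ U) (hUH : U ⊆ H) :
    ∑ S ∈ Icc S₀ U, binomialWeight H p S = p ^ #S₀ * (1 - p) ^ (#H - #U) := by
  have hunion : ∀ S' ∈ (U \ S₀).powerset, binomialWeight H p (S₀ ∪ S') =
      p ^ #S₀ * (1 - p) ^ (#H - #U) * (p ^ #S' * (1 - p) ^ (#(U \ S₀) - #S')) := by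
    intro S' hS'
    have hS'U := mem_powerset.1 hS'
    have := card_le_card hS'U
    have := card_le_card hUH
    have := card_le_card hS₀U
    have := card_sdiff_of_subset hS₀U
    rw [binomialWeight, card_union_of_disjoint (disjoint_of_subset_right hS'U disjoint_sdiff),
      show #H - (#S₀ + #S') = (#H - #U) + (#(U \ S₀) - #S') by omega, pow_add, pow_add]
    ring
  have hinj : Set.InjOn (S₀ ∪ ·) (U \ S₀).powerset := fun S' hS' S'' hS'' h => by
    have hcancel : ∀ T ∈ (U \ S₀).powerset, (S₀ ∪ T) \ S₀ = T := fun T hT =>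
      union_sdiff_cancel_left (disjoint_of_subset_right (mem_powerset.1 hT) disjoint_sdiff)
    rw [← hcancel S' hS', ← hcancel S'' hS'']
    exact congrArg (· \ S₀) h
  rw [Icc_eq_image_powerset hS₀U, sum_image hinj, sum_congr rfl hunion, ← mul_sum,
    sum_pow_mul_eq_add_pow, add_sub_cancel, one_pow, mul_one]

theorem sum_binomialWeight_mul_card :
    ∑ S ∈ H.powerset, binomialWeight H p S * #S = p * #H := by
  calc ∑ S ∈ H.powerset, binomialWeight H p S * #S
      = ∑ S ∈ H.powerset, ∑ _a ∈ S, binomialWeight H p S := by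
        simp only [sum_const, nsmul_eq_mul, mul_comm]
    _ = ∑ a ∈ H, ∑ S ∈ Icc {a} H, binomialWeight H p S :=
        sum_comm' fun S a => by
          simp only [mem_powerset, mem_Icc, singleton_subset_iff]
          exact ⟨fun h => ⟨⟨h.2, h.1⟩, h.1 h.2⟩, fun h => ⟨h.1.2, h.1.1⟩⟩
    _ = p * #H := by
        rw [sum_congr rfl fun a ha => sum_binomialWeight_Icc (singleton_subset_iff.2 ha) subset_rfl]
        simp [mul_comm]

end BinomialWeight

theorem sum_pow_card_filter_card_le {α : Type*} {H : Finset α} {p : ℝ} (hp : 0 ≤ p)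
    (hpH : 1 ≤ p * #H) (s : ℕ) :
    ∑ S ∈ H.powerset with #S ≤ s, p ^ #S ≤ (s + 1) * (p * #H) ^ s := by
  have hmaps : ∀ S ∈ {S ∈ H.powerset | #S ≤ s}, #S ∈ range (s + 1) := fun S hS =>
    mem_range.2 (Nat.lt_succ_of_le (mem_filter.1 hS).2)
  rw [← sum_fiberwise_of_maps_to' hmaps (fun k => p ^ k)]
  calc ∑ k ∈ range (s + 1), ∑ S ∈ {S ∈ H.powerset | #S ≤ s} with #S = k, p ^ k
      ≤ ∑ k ∈ range (s + 1), (p * #H) ^ s := by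
        refine sum_le_sum fun k hk => ?_
        have hfiber : ({S ∈ H.powerset | #S ≤ s}.filter (#· = k)) ⊆ H.powersetCard k :=
          fun S hS => by
            simp only [mem_filter, mem_powerset] at hS
            exact mem_powersetCard.2 ⟨hS.1.1, hS.2⟩
        calc ∑ S ∈ {S ∈ H.powerset | #S ≤ s} with #S = k, p ^ k
            ≤ (#H).choose k * p ^ k := by
              rw [sum_const, nsmul_eq_mul, ← card_powersetCard]
              gcongr
          _ ≤ (p * #H) ^ k := by
              rw [mul_pow, mul_comm]
              gcongr
              exact_mod_cast Nat.choose_le_pow _ _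
          _ ≤ (p * #H) ^ s := pow_le_pow_right₀ hpH (Nat.lt_succ_iff.1 (mem_range.1 hk))
    _ = (s + 1) * (p * #H) ^ s := by simp [mul_comm]

noncomputable def crossers {α X : Type*} (H : Finset α) (A : α → Set X) (Δ : Set X) : Finset α :=
  {a ∈ H | (Δ ∩ A a).Nonempty ∧ (Δ \ A a).Nonempty}

namespace ACDScheme

variable {α X : Type} {H S : Finset α} {A : α → Set X} {C' : ℝ} {d s : ℕ} {Δ : Set X}
  (𝒯 : ACDScheme H A C' d s)

theorem crossers_subset_I (hS : S ⊆ H) (hΔ : Δ ∈ 𝒯.T S) : crossers H A Δ ⊆ 𝒯.I Δ :=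
  fun a ha => by
    obtain ⟨haH, hin, hout⟩ := mem_filter.1 ha
    exact 𝒯.crosses_mem_I S hS Δ hΔ a haH hin hout

theorem disjoint_I_of_mem_T (hS : S ⊆ H) (hΔ : Δ ∈ 𝒯.T S) : Disjoint (𝒯.I Δ) S :=
  disjoint_iff_inter_eq_empty.2 ((𝒯.mem_T_iff S hS Δ hΔ S hS).1 hΔ).1

theorem crossers_eq_empty_of_mem_T_self (hΔ : Δ ∈ 𝒯.T H) : crossers H A Δ = ∅ :=
  eq_empty_of_forall_notMem fun _ ha =>
    disjoint_left.1 (𝒯.disjoint_I_of_mem_T subset_rfl hΔ)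
      (𝒯.crossers_subset_I subset_rfl hΔ ha) (mem_filter.1 ha).1

theorem card_filter_T_le_sum (P : Set X → Prop) (hS : S ⊆ H) :
    #{Δ ∈ 𝒯.T S | P Δ} ≤
      ∑ S₀ ∈ H.powerset with #S₀ ≤ s, #{Δ ∈ 𝒯.T S₀ | P Δ ∧ S ∈ Icc S₀ (H \ 𝒯.I Δ)} := by
  refine (card_le_card fun Δ hΔ => ?_).trans card_biUnion_le
  obtain ⟨hΔS, hP⟩ := mem_filter.1 hΔ
  obtain ⟨hIS, S₀, hS₀S, hS₀s, hΔS₀⟩ := (𝒯.mem_T_iff S hS Δ hΔS S hS).1 hΔS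
  refine mem_biUnion.2 ⟨S₀, mem_filter.2 ⟨mem_powerset.2 (hS₀S.trans hS), hS₀s⟩, ?_⟩
  refine mem_filter.2 ⟨hΔS₀, hP, mem_Icc.2 ⟨hS₀S, ?_⟩⟩
  exact subset_sdiff.2 ⟨hS, (disjoint_iff_inter_eq_empty.2 hIS).symm⟩

theorem sum_binomialWeight_mul_card_filter_T_le (P : Set X → Prop) {p q : ℝ} (hp0 : 0 ≤ p)
    (hp1 : p ≤ 1) (hq0 : 0 ≤ q)
    (hq : ∀ S₀ ⊆ H, ∀ Δ ∈ 𝒯.T S₀, P Δ → (1 - p) ^ #(𝒯.I Δ) ≤ q) :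
    ∑ S ∈ H.powerset, binomialWeight H p S * #{Δ ∈ 𝒯.T S | P Δ} ≤
      ∑ S₀ ∈ H.powerset with #S₀ ≤ s, #(𝒯.T S₀) * (p ^ #S₀ * q) := by
  calc ∑ S ∈ H.powerset, binomialWeight H p S * #{Δ ∈ 𝒯.T S | P Δ}
      ≤ ∑ S ∈ H.powerset, ∑ S₀ ∈ H.powerset with #S₀ ≤ s,
          ∑ Δ ∈ 𝒯.T S₀ with P Δ ∧ S ∈ Icc S₀ (H \ 𝒯.I Δ), binomialWeight H p S := by
        refine sum_le_sum fun S hS => ?_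
        simp only [sum_const, nsmul_eq_mul, ← sum_mul, mul_comm (binomialWeight H p S)]
        gcongr
        · exact binomialWeight_nonneg hp0 hp1 S
        · exact_mod_cast 𝒯.card_filter_T_le_sum P (mem_powerset.1 hS)
    _ = ∑ S₀ ∈ H.powerset with #S₀ ≤ s, ∑ Δ ∈ 𝒯.T S₀ with P Δ,
          ∑ S ∈ Icc S₀ (H \ 𝒯.I Δ), binomialWeight H p S := by
        rw [sum_comm]
        refine sum_congr rfl fun S₀ _ => sum_comm' fun S Δ => ?_
        simp only [mem_powerset, mem_filter, mem_Icc, subset_sdiff]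
        tauto
    _ ≤ ∑ S₀ ∈ H.powerset with #S₀ ≤ s, ∑ _Δ ∈ 𝒯.T S₀, p ^ #S₀ * q := by
        refine sum_le_sum fun S₀ hS₀ => ?_
        have hS₀H := mem_powerset.1 (mem_filter.1 hS₀).1
        refine (sum_le_sum fun Δ hΔ => ?_).trans
          (sum_le_sum_of_subset_of_nonneg (filter_subset _ _) fun _ _ _ => by positivity)
        obtain ⟨hΔS₀, hP⟩ := mem_filter.1 hΔ
        have hIH := 𝒯.I_subset Δ
        have hS₀I : S₀ ⊆ H \ 𝒯.I Δ :=
          subset_sdiff.2 ⟨hS₀H, (𝒯.disjoint_I_of_mem_T hS₀H hΔS₀).symm⟩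
        rw [sum_binomialWeight_Icc hS₀I sdiff_subset, card_sdiff_of_subset hIH,
          Nat.sub_sub_self (card_le_card hIH)]
        exact mul_le_mul_of_nonneg_left (hq S₀ hS₀H Δ hΔS₀ hP) (pow_nonneg hp0 _)
    _ = ∑ S₀ ∈ H.powerset with #S₀ ≤ s, #(𝒯.T S₀) * (p ^ #S₀ * q) := by
        simp only [sum_const, nsmul_eq_mul]

theorem card_T_le_of_card_le (hC' : 0 ≤ C') {a b u : ℝ} (hS : S ⊆ H) (hSu : #S ≤ a * u)
    (hu : 1 ≤ b * u) : #(𝒯.T S) ≤ C' * (a ^ d + b ^ d) * u ^ d := by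
  have hpow : (#S : ℝ) ^ d + 1 ≤ (a ^ d + b ^ d) * u ^ d := by
    rw [add_mul, ← mul_pow, ← mul_pow]
    exact add_le_add (pow_le_pow_left₀ (Nat.cast_nonneg _) hSu d) (one_le_pow₀ hu)
  calc (#(𝒯.T S) : ℝ) ≤ C' * (#S ^ d + 1) := 𝒯.card_bound S hS
    _ ≤ C' * ((a ^ d + b ^ d) * u ^ d) := by gcongr
    _ = C' * (a ^ d + b ^ d) * u ^ d := by ring

theorem sum_binomialWeight_mul_card_filter_lt_card_crossers_le (hC' : 0 ≤ C') {p m : ℝ}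
    (hp0 : 0 ≤ p) (hp1 : p ≤ 1) (hpH : 1 ≤ p * #H) :
    ∑ S ∈ H.powerset, binomialWeight H p S * #{Δ ∈ 𝒯.T S | m < #(crossers H A Δ)} ≤
      C' * (s ^ d + 1) * (s + 1) * (p * #H) ^ s * exp (-(p * m)) := by
  have hsurvive : ∀ S₀ ⊆ H, ∀ Δ ∈ 𝒯.T S₀, m < #(crossers H A Δ) →
      (1 - p) ^ #(𝒯.I Δ) ≤ exp (-(p * m)) := fun S₀ hS₀ Δ hΔ hm => by
    have hmI : m ≤ #(𝒯.I Δ) :=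
      hm.le.trans (by exact_mod_cast card_le_card (𝒯.crossers_subset_I hS₀ hΔ))
    calc (1 - p) ^ #(𝒯.I Δ) ≤ exp (-p) ^ #(𝒯.I Δ) :=
          pow_le_pow_left₀ (sub_nonneg.2 hp1) (one_sub_le_exp_neg p) _
      _ = exp (-(p * #(𝒯.I Δ))) := by rw [← exp_nat_mul]; ring_nf
      _ ≤ exp (-(p * m)) := by gcongr
  refine (𝒯.sum_binomialWeight_mul_card_filter_T_le _ hp0 hp1 (exp_nonneg _) hsurvive).trans ?_
  calc ∑ S₀ ∈ H.powerset with #S₀ ≤ s, #(𝒯.T S₀) * (p ^ #S₀ * exp (-(p * m)))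
      ≤ ∑ S₀ ∈ H.powerset with #S₀ ≤ s, C' * (s ^ d + 1) * exp (-(p * m)) * p ^ #S₀ := by
        refine sum_le_sum fun S₀ hS₀ => ?_
        obtain ⟨hS₀H, hS₀s⟩ := mem_filter.1 hS₀
        have hcard : (#(𝒯.T S₀) : ℝ) ≤ C' * (s ^ d + 1) :=
          (𝒯.card_bound S₀ (mem_powerset.1 hS₀H)).trans (by gcongr)
        have := mul_le_mul_of_nonneg_left hcard
          (by positivity : 0 ≤ p ^ #S₀ * exp (-(p * m)))
        linear_combination this
    _ ≤ C' * (s ^ d + 1) * exp (-(p * m)) * ((s + 1) * (p * #H) ^ s) := by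
        rw [← mul_sum]
        gcongr
        exact sum_pow_card_filter_card_le hp0 hpH s
    _ = C' * (s ^ d + 1) * (s + 1) * (p * #H) ^ s * exp (-(p * m)) := by ring

theorem exists_subset_card_lt_forall_card_crossers_le (hC' : 0 ≤ C') {p m : ℝ} (hp0 : 0 ≤ p)
    (hp1 : p ≤ 1) (hpH : 1 ≤ p * #H)
    (hsmall : C' * (s ^ d + 1) * (s + 1) * (p * #H) ^ s * exp (-(p * m)) ≤ 1 / 3) :
    ∃ S ⊆ H, (#S : ℝ) < 3 * (p * #H) ∧ ∀ Δ ∈ 𝒯.T S, (#(crossers H A Δ) : ℝ) ≤ m := by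
  have ht0 : 0 < p * #H := one_pos.trans_le hpH
  set bad : Finset α → ℕ := fun S => #{Δ ∈ 𝒯.T S | m < #(crossers H A Δ)}
  have hsize : ∑ S ∈ H.powerset, binomialWeight H p S * (#S / (3 * (p * #H))) = 1 / 3 := by
    simp_rw [← mul_div_assoc, ← sum_div, sum_binomialWeight_mul_card]
    rw [div_mul_cancel_right₀ ht0.ne', one_div]
  have hbad : ∑ S ∈ H.powerset, binomialWeight H p S * bad S ≤ 1 / 3 :=
    (𝒯.sum_binomialWeight_mul_card_filter_lt_card_crossers_le hC' hp0 hp1 hpH).trans hsmall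
  -- `|S| / (3 p |H|) + bad S` has expectation `≤ 2/3 < 1`, so some sample makes it `< 1`.
  obtain ⟨S, hS, hlt⟩ := exists_lt_of_sum_lt (s := H.powerset)
    (f := fun S => binomialWeight H p S * (#S / (3 * (p * #H)) + bad S))
    (g := binomialWeight H p) (by
      simp only [mul_add, sum_add_distrib, hsize, sum_binomialWeight_powerset]
      linarith)
  have hgood : (#S : ℝ) / (3 * (p * #H)) + bad S < 1 :=
    lt_of_mul_lt_mul_left (by rwa [mul_one]) (binomialWeight_nonneg hp0 hp1 S)
  refine ⟨S, mem_powerset.1 hS, ?_, fun Δ hΔ => ?_⟩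
  · exact (div_lt_one (by positivity)).1 (by linarith [(bad S).cast_nonneg (α := ℝ)])
  · have hsize0 : 0 ≤ (#S : ℝ) / (3 * (p * #H)) := by positivity
    have hbad0 : bad S = 0 := Nat.cast_lt_one (α := ℝ).1 (by linarith)
    exact not_lt.1 (filter_eq_empty_iff.1 (card_eq_zero.1 hbad0) hΔ)

end ACDScheme

theorem exists_nat_forall_mul_pow_le_pow (A : ℝ) (s : ℕ) :
    ∃ c : ℕ, 2 ≤ c ∧ ∀ x : ℝ, 2 ≤ x → A * c ^ s * x ^ (2 * s) ≤ x ^ c := by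
  have hlim : Tendsto (fun n : ℕ => A * 4 ^ s * ((n : ℝ) ^ s / 2 ^ n)) atTop
      (𝓝 0) := by
    simpa using (tendsto_pow_const_div_const_pow_of_one_lt s one_lt_two).const_mul (A * 4 ^ s)
  obtain ⟨c, hc1, hc⟩ :=
    ((hlim.eventually (gt_mem_nhds one_pos)).and (eventually_ge_atTop (2 * s + 2))).exists
  have h4 : (2 : ℝ) ^ c = 4 ^ s * 2 ^ (c - 2 * s) := by
    rw [show (4 : ℝ) = 2 ^ 2 by norm_num, ← pow_mul, ← pow_add, Nat.add_sub_cancel' (by omega)]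
  have hA : A * c ^ s ≤ 2 ^ (c - 2 * s) := by
    rw [mul_div_assoc', div_lt_one (by positivity), h4] at hc1
    nlinarith [pow_pos (four_pos (α := ℝ)) s]
  refine ⟨c, by omega, fun x hx => ?_⟩
  calc A * c ^ s * x ^ (2 * s) ≤ 2 ^ (c - 2 * s) * x ^ (2 * s) := by gcongr
    _ ≤ x ^ (c - 2 * s) * x ^ (2 * s) := by gcongr
    _ = x ^ c := by rw [← pow_add, Nat.sub_add_cancel (by omega)]

theorem exists_nat_forall_mul_pow_mul_exp_neg_le {A : ℝ} (hA : 0 ≤ A) (s : ℕ) :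
    ∃ c : ℕ, 2 ≤ c ∧ ∀ r : ℝ, 1 ≤ r →
      A * (c * r * log (r + 1)) ^ s * exp (-(c * log (r + 1))) ≤ 1 / 3 := by
  obtain ⟨c, hc2, hc⟩ := exists_nat_forall_mul_pow_le_pow (3 * A) s
  refine ⟨c, hc2, fun r hr => ?_⟩
  have hx : 0 < r + 1 := by linarith
  have ht : c * r * log (r + 1) ≤ c * (r + 1) ^ 2 := by
    have hlog : log (r + 1) ≤ r + 1 := (log_le_sub_one_of_pos hx).trans (by linarith)
    have hlog0 : 0 ≤ log (r + 1) := log_nonneg (by linarith)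
    rw [mul_assoc, sq]
    gcongr
    linarith
  have hexp : exp (-(c * log (r + 1))) = ((r + 1) ^ c)⁻¹ := by
    rw [← log_pow, exp_neg, exp_log (pow_pos hx c)]
  calc A * (c * r * log (r + 1)) ^ s * exp (-(c * log (r + 1)))
      ≤ A * (c * (r + 1) ^ 2) ^ s * ((r + 1) ^ c)⁻¹ := by
        rw [hexp]
        gcongr
        exact mul_nonneg (mul_nonneg (Nat.cast_nonneg _) (by linarith))
          (log_nonneg (by linarith))
    _ = 3 * A * c ^ s * (r + 1) ^ (2 * s) / (3 * (r + 1) ^ c) := by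
        rw [mul_pow, ← pow_mul]
        field_simp
    _ ≤ 1 / 3 := by
        rw [div_le_div_iff₀ (by positivity) three_pos]
        linarith [hc (r + 1) (by linarith)]

theorem suboptimal_cutting_lemma_general (C' : ℝ) (hC' : 0 < C') (d s : ℕ) :
    ∃ K : ℝ, ∀ (α X : Type) (H : Finset α) (A : α → Set X)
      (𝒯 : ACDScheme H A C' d s), 1 ≤ H.card →
      ∀ r : ℝ, 1 < r → r < (H.card : ℝ) →
      ∃ S ⊆ H, ((𝒯.T S).card : ℝ) ≤ K * r ^ d * (Real.log (r + 1)) ^ d ∧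
        ∀ Δ ∈ 𝒯.T S,
          ((H.filter (fun a =>
              (Δ ∩ A a).Nonempty ∧ (Δ \ A a).Nonempty)).card : ℝ)
            ≤ (H.card : ℝ) / r := by
  obtain ⟨c, hc2, hc⟩ :=
    exists_nat_forall_mul_pow_mul_exp_neg_le (A := C' * (s ^ d + 1) * (s + 1)) (by positivity) s
  refine ⟨C' * ((3 * c) ^ d + (log 2)⁻¹ ^ d), fun α X H A 𝒯 _ r hr hrH => ?_⟩
  set L := log (r + 1)
  have hL : log 2 ≤ L := log_le_log two_pos (by linarith)
  have ht : 1 ≤ c * r * L := by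
    calc (1 : ℝ) ≤ 2 * 1 * log 2 := by linarith [log_two_gt_d9]
      _ ≤ c * r * L := by gcongr; exact_mod_cast hc2
  have hrL : 1 ≤ (log 2)⁻¹ * (r * L) := by
    rw [inv_mul_eq_div, one_le_div (log_pos one_lt_two)]
    exact hL.trans (le_mul_of_one_le_left ((log_pos one_lt_two).le.trans hL) hr.le)
  have hcard : ∀ S ⊆ H, (#S : ℝ) ≤ 3 * (c * r * L) →
      (#(𝒯.T S) : ℝ) ≤ C' * ((3 * c) ^ d + (log 2)⁻¹ ^ d) * r ^ d * L ^ d := fun S hS hSt => by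
    rw [mul_assoc _ (r ^ d), ← mul_pow]
    exact 𝒯.card_T_le_of_card_le hC'.le hS (by linarith) hrL
  by_cases htH : (#H : ℝ) ≤ c * r * L
  · refine ⟨H, subset_rfl, hcard H subset_rfl (by linarith), fun Δ hΔ => ?_⟩
    rw [show H.filter _ = crossers H A Δ from rfl, 𝒯.crossers_eq_empty_of_mem_T_self hΔ]
    simp only [card_empty, Nat.cast_zero]
    positivity
  · have hH : 0 < (#H : ℝ) := by linarith
    obtain ⟨S, hSH, hSt, hS⟩ := 𝒯.exists_subset_card_lt_forall_card_crossers_le hC'.le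
      (p := c * r * L / #H) (m := #H / r) (by positivity) (div_le_one_of_le₀ (by linarith) hH.le)
      (by rwa [div_mul_cancel₀ _ hH.ne'])
      (by rw [div_mul_cancel₀ _ hH.ne', show c * r * L / #H * (#H / r) = c * L by field_simp]
          exact hc r hr.le)
    rw [div_mul_cancel₀ _ hH.ne'] at hSt
    exact ⟨S, hSH, hcard S hSH hSt.le, hS⟩

/-- **Suboptimal cutting lemma (axiomatic form).** For every `C' > 0`, `d ≥ 1`,
`s ≥ 1` there is a constant `K` such that for every abstract cell decomposition
scheme with parameters `(C', d, s)` over `(H, (A a))` with `|H| = n ≥ 1` and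
every real `1 < r < n`, there exists `S ⊆ H` with
`|T S| ≤ K·r^d·(log (r+1))^d` and such that every `Δ ∈ T S` is crossed by at
most `n/r` of the sets `A a` (`a ∈ H`). -/
theorem suboptimal_cutting_lemma (C' : ℝ) (hC' : 0 < C') (d s : ℕ)
    (hd : 1 ≤ d) (hs : 1 ≤ s) :
    ∃ K : ℝ, ∀ (α X : Type) (H : Finset α) (A : α → Set X)
      (𝒯 : ACDScheme H A C' d s), 1 ≤ H.card →
      ∀ r : ℝ, 1 < r → r < (H.card : ℝ) →
      ∃ S ⊆ H, ((𝒯.T S).card : ℝ) ≤ K * r ^ d * (Real.log (r + 1)) ^ d ∧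
        ∀ Δ ∈ 𝒯.T S,
          ((H.filter (fun a =>
              (Δ ∩ A a).Nonempty ∧ (Δ \ A a).Nonempty)).card : ℝ)
            ≤ (H.card : ℝ) / r :=
  suboptimal_cutting_lemma_general C' hC' d s
end

section
/- Set-system correlation lemma. Let Ω be a finite set of size m, let D_1, …, D_q be subsets of Ω with |D_i| ≤ u for all 1 ≤ i ≤ q (for some natural number u), and let F = {X ⊆ Ω : D_i ⊆ X for some i, 1 ≤ i ≤ q} be the up-set generated by the D_i. Let p̃ and p be real numbers with 0 < p̃ ≤ p ≤ 1. Then Σ_{X ∈ F} p̃^{|X|}·(1−p̃)^{m−|X|} ≥ (p̃/p)^u · Σ_{X ∈ F} p^{|X|}·(1−p)^{m−|X|}. -/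
open scoped Classical

/-!
Couple the two product measures by thinning: draw `Y` with density `p` and keep each element of
`Y` independently with probability `r = p̃ / p`; the result `X` has density `p̃`. If `Y` lies in
the up-set, it contains some `D i`, and with probability at least `r ^ |D i| ≥ r ^ u` the thinning
keeps all of `D i`, so that `X` lies in the up-set as well.
-/

open Finset

section

variable {α : Type*}

theorem Finset.sum_Icc_pow_mul_pow {R : Type*} [CommSemiring R] {s t : Finset α} (h : s ⊆ t)
    (a b : R) :
    ∑ v ∈ Icc s t, a ^ (#v - #s) * b ^ (#t - #v) = (a + b) ^ (#t - #s) := by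
  have hinj : Set.InjOn (s ∪ ·) (t \ s).powerset := by
    intro v hv w hw hvw
    have hsv : Disjoint s v := disjoint_of_subset_right (mem_powerset.1 hv) disjoint_sdiff
    have hsw : Disjoint s w := disjoint_of_subset_right (mem_powerset.1 hw) disjoint_sdiff
    rw [← union_sdiff_cancel_left hsv, ← union_sdiff_cancel_left hsw]
    exact congrArg (· \ s) hvw
  rw [Icc_eq_image_powerset h, sum_image hinj, ← card_sdiff_of_subset h,
    ← sum_pow_mul_eq_add_pow]
  refine sum_congr rfl fun v hv => ?_
  have hvts : v ⊆ t \ s := mem_powerset.1 hv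
  have hcard : #(s ∪ v) = #s + #v :=
    card_union_of_disjoint (disjoint_of_subset_right hvts disjoint_sdiff)
  have hv_le : #v ≤ #t - #s := card_sdiff_of_subset h ▸ card_le_card hvts
  rw [hcard, card_sdiff_of_subset h, Nat.add_sub_cancel_left, Nat.sub_add_eq]

noncomputable def biasedWeight (Ω : Finset α) (p : ℝ) (X : Finset α) : ℝ :=
  p ^ #X * (1 - p) ^ (#Ω - #X)

theorem biasedWeight_nonneg (Ω : Finset α) {p : ℝ} (hp₀ : 0 ≤ p) (hp₁ : p ≤ 1) (X : Finset α) :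
    0 ≤ biasedWeight Ω p X :=
  mul_nonneg (pow_nonneg hp₀ _) (pow_nonneg (sub_nonneg.2 hp₁) _)

theorem sum_biasedWeight_Icc {D Y : Finset α} (h : D ⊆ Y) (r : ℝ) :
    ∑ X ∈ Icc D Y, biasedWeight Y r X = r ^ #D := by
  have hsplit : ∀ X ∈ Icc D Y,
      biasedWeight Y r X = r ^ #D * (r ^ (#X - #D) * (1 - r) ^ (#Y - #X)) := by
    intro X hX
    rw [biasedWeight, ← mul_assoc, ← pow_add,
      Nat.add_sub_cancel' (card_le_card (mem_Icc.1 hX).1)]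
  rw [sum_congr rfl hsplit, ← mul_sum, sum_Icc_pow_mul_pow h, add_sub_cancel, one_pow, mul_one]

/-- Thinning a `p`-random set by keeping each element with probability `r` gives a
`p * r`-random set. -/
theorem sum_biasedWeight_mul_biasedWeight {Ω X : Finset α} (h : X ⊆ Ω) (p r : ℝ) :
    ∑ Y ∈ Icc X Ω, biasedWeight Ω p Y * biasedWeight Y r X = biasedWeight Ω (p * r) X := by
  have hsplit : ∀ Y ∈ Icc X Ω, biasedWeight Ω p Y * biasedWeight Y r X =
      (p * r) ^ #X * ((p * (1 - r)) ^ (#Y - #X) * (1 - p) ^ (#Ω - #Y)) := by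
    intro Y hY
    obtain ⟨k, hk⟩ := Nat.exists_eq_add_of_le (card_le_card (mem_Icc.1 hY).1)
    rw [biasedWeight, biasedWeight, hk, Nat.add_sub_cancel_left, mul_pow, mul_pow, pow_add]
    ring
  rw [sum_congr rfl hsplit, ← mul_sum, sum_Icc_pow_mul_pow h, biasedWeight]
  ring_nf

theorem pow_mul_sum_biasedWeight_le_sum_biasedWeight_mul {Ω : Finset α} {F : Finset (Finset α)}
    {u : ℕ} (hFΩ : ∀ X ∈ F, X ⊆ Ω) (hup : ∀ X ∈ F, ∀ Y, X ⊆ Y → Y ⊆ Ω → Y ∈ F)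
    (hgen : ∀ Y ∈ F, ∃ D ∈ F, D ⊆ Y ∧ #D ≤ u) {p r : ℝ} (hp₀ : 0 ≤ p) (hp₁ : p ≤ 1)
    (hr₀ : 0 ≤ r) (hr₁ : r ≤ 1) :
    r ^ u * ∑ Y ∈ F, biasedWeight Ω p Y ≤ ∑ X ∈ F, biasedWeight Ω (p * r) X := by
  have hkeep : ∀ Y ∈ F, r ^ u ≤ ∑ X ∈ F with X ⊆ Y, biasedWeight Y r X := by
    intro Y hY
    obtain ⟨D, hDF, hDY, hDu⟩ := hgen Y hY
    calc r ^ u ≤ r ^ #D := pow_le_pow_of_le_one hr₀ hr₁ hDu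
      _ = ∑ X ∈ Icc D Y, biasedWeight Y r X := (sum_biasedWeight_Icc hDY r).symm
      _ ≤ ∑ X ∈ F with X ⊆ Y, biasedWeight Y r X := by
        refine sum_le_sum_of_subset_of_nonneg (fun X hX => ?_)
          fun X _ _ => biasedWeight_nonneg Y hr₀ hr₁ X
        obtain ⟨hDX, hXY⟩ := mem_Icc.1 hX
        exact mem_filter.2 ⟨hup D hDF X hDX (hXY.trans (hFΩ Y hY)), hXY⟩
  calc r ^ u * ∑ Y ∈ F, biasedWeight Ω p Y
      ≤ ∑ Y ∈ F, ∑ X ∈ F with X ⊆ Y, biasedWeight Ω p Y * biasedWeight Y r X := by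
        rw [mul_sum]
        refine sum_le_sum fun Y hY => ?_
        rw [← mul_sum, mul_comm]
        exact mul_le_mul_of_nonneg_left (hkeep Y hY) (biasedWeight_nonneg Ω hp₀ hp₁ Y)
    _ = ∑ X ∈ F, ∑ Y ∈ Icc X Ω, biasedWeight Ω p Y * biasedWeight Y r X := by
        refine sum_comm' fun Y X => ⟨fun ⟨hY, hX⟩ => ?_, fun ⟨hY, hX⟩ => ?_⟩
        · obtain ⟨hXF, hXY⟩ := mem_filter.1 hX
          exact ⟨mem_Icc.2 ⟨hXY, hFΩ Y hY⟩, hXF⟩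
        · obtain ⟨hXY, hYΩ⟩ := mem_Icc.1 hY
          exact ⟨hup X hX Y hXY hYΩ, mem_filter.2 ⟨hX, hXY⟩⟩
    _ = ∑ X ∈ F, biasedWeight Ω (p * r) X :=
        sum_congr rfl fun X hX => sum_biasedWeight_mul_biasedWeight (hFΩ X hX) p r

end

/-- **Set-system correlation lemma.** Let `Ω` be a finite set of size `m`, let
`D 1, …, D q` be subsets of `Ω` with `|D i| ≤ u`, and let
`F = {X ⊆ Ω : D i ⊆ X for some i}` be the up-set generated by the `D i`. For
real numbers `0 < p' ≤ p ≤ 1` (here `p'` plays the role of `p̃`),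
`Σ_{X ∈ F} p'^|X|·(1−p')^(m−|X|) ≥ (p'/p)^u · Σ_{X ∈ F} p^|X|·(1−p)^(m−|X|)`. -/
theorem set_system_correlation {α : Type*} (Ω : Finset α) (m : ℕ) (hm : Ω.card = m)
    (q u : ℕ) (D : Fin q → Finset α) (hDΩ : ∀ i, D i ⊆ Ω) (hDu : ∀ i, (D i).card ≤ u)
    (p' p : ℝ) (hp' : 0 < p') (hp'p : p' ≤ p) (hp : p ≤ 1) :
    ∑ X ∈ Ω.powerset.filter (fun X => ∃ i, D i ⊆ X),
        p' ^ X.card * (1 - p') ^ (m - X.card)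
      ≥ (p' / p) ^ u *
        ∑ X ∈ Ω.powerset.filter (fun X => ∃ i, D i ⊆ X),
          p ^ X.card * (1 - p) ^ (m - X.card) := by
  subst hm
  have hp₀ : 0 < p := hp'.trans_le hp'p
  have hthin : p * (p' / p) = p' := mul_div_cancel₀ p' hp₀.ne'
  have key := pow_mul_sum_biasedWeight_le_sum_biasedWeight_mul (Ω := Ω) (u := u)
    (F := Ω.powerset.filter (fun X => ∃ i, D i ⊆ X))
    (fun X hX => mem_powerset.1 (mem_filter.1 hX).1)
    (fun X hX Y hXY hYΩ => by
      obtain ⟨i, hi⟩ := (mem_filter.1 hX).2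
      exact mem_filter.2 ⟨mem_powerset.2 hYΩ, i, hi.trans hXY⟩)
    (fun Y hY => by
      obtain ⟨i, hi⟩ := (mem_filter.1 hY).2
      exact ⟨D i, mem_filter.2 ⟨mem_powerset.2 (hDΩ i), i, subset_rfl⟩, hi, hDu i⟩)
    hp₀.le hp (div_nonneg hp'.le hp₀.le) (div_le_one_of_le₀ hp'p hp₀.le)
  rwa [hthin] at key
end

section
/- d-th moment bound for the binomial distribution. For every natural number n, every natural number d ≥ 1, and every real p with 0 ≤ p ≤ 1, one has Σ_{k=0}^{n} C(n,k)·p^k·(1−p)^{n−k}·k^d ≤ (n·p + d)^d. Equivalently, if S is a random subset of an n-element set H obtained by including each element independently with probability p, then E(|S|^d) ≤ (np + d)^d. -/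
/-!
Write `E_n f = ∑ₖ C(n,k) pᵏ (1-p)ⁿ⁻ᵏ f k`. Absorbing the factor `k` into the binomial coefficient
gives `E_{n+1}[k^(e+1)] = (n+1) p · E_n[(j+1)^e]`, and expanding `(j+1)^e` binomially turns the
right side into `(n+1) p ∑ᵢ C(e,i) E_n[j^i]`. Strong induction on the exponent bounds each
`E_n[j^i]` by `(np+e)^i`, so the sum is at most `(n+1) p (np+e+1)^e ≤ ((n+1)p + e+1)^(e+1)`.
-/

open Finset

noncomputable def binomialMean (n : ℕ) (p : ℝ) (f : ℕ → ℝ) : ℝ :=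
  ∑ k ∈ range (n + 1), (n.choose k : ℝ) * p ^ k * (1 - p) ^ (n - k) * f k

namespace binomialMean

variable (n : ℕ) (p : ℝ)

theorem const_one : binomialMean n p (fun _ => 1) = 1 := by
  have h := add_pow p (1 - p) n
  rw [add_sub_cancel, one_pow] at h
  exact (sum_congr rfl fun k _ => by ring).trans h.symm

theorem sum_mul {ι : Type*} (s : Finset ι) (c : ι → ℝ) (f : ι → ℕ → ℝ) :
    binomialMean n p (fun k => ∑ i ∈ s, c i * f i k) = ∑ i ∈ s, c i * binomialMean n p (f i) := by
  simp only [binomialMean, Finset.mul_sum]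
  rw [Finset.sum_comm]
  exact sum_congr rfl fun i _ => sum_congr rfl fun k _ => by ring

theorem succ_natCast_mul (f : ℕ → ℝ) :
    binomialMean (n + 1) p (fun k => k * f k) =
      (n + 1) * p * binomialMean n p (fun j => f (j + 1)) := by
  rw [binomialMean, sum_range_succ', binomialMean, Finset.mul_sum]
  simp only [Nat.cast_zero, zero_mul, mul_zero, add_zero]
  refine sum_congr rfl fun j _ => ?_
  have hchoose : ((n + 1).choose (j + 1) : ℝ) * (j + 1) = (n + 1) * n.choose j := by
    exact_mod_cast (Nat.add_one_mul_choose_eq n j).symm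
  rw [Nat.add_sub_add_right]
  push_cast
  linear_combination (p ^ (j + 1) * (1 - p) ^ (n - j) * f (j + 1)) * hchoose

theorem add_one_pow (e : ℕ) :
    binomialMean n p (fun j => ((j : ℝ) + 1) ^ e) =
      ∑ i ∈ range (e + 1), (e.choose i : ℝ) * binomialMean n p (fun j => (j : ℝ) ^ i) := by
  rw [← sum_mul]
  congr 1
  funext j
  rw [add_pow]
  exact sum_congr rfl fun i _ => by ring

theorem pow_le {p : ℝ} (hp : 0 ≤ p) (d : ℕ) :
    ∀ n : ℕ, binomialMean n p (fun k => (k : ℝ) ^ d) ≤ (n * p + d) ^ d := by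
  induction d using Nat.strong_induction_on with
  | _ d ih =>
  rcases d with _ | e
  · intro n
    simp only [pow_zero]
    exact (const_one n p).le
  rintro (_ | n)
  · have hzero : binomialMean 0 p (fun k => (k : ℝ) ^ (e + 1)) = 0 := by simp [binomialMean]
    rw [hzero]
    positivity
  have hmoments : ∀ i ∈ range (e + 1),
      (e.choose i : ℝ) * binomialMean n p (fun j => (j : ℝ) ^ i) ≤
        (e.choose i : ℝ) * (n * p + e) ^ i := by
    intro i hi
    have hie : i ≤ e := Nat.lt_succ_iff.mp (mem_range.mp hi)
    gcongr
    exact (ih i (by omega) n).trans (by gcongr)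
  have hmean : binomialMean n p (fun j => ((j : ℝ) + 1) ^ e) ≤ (n * p + e + 1) ^ e := by
    rw [add_one_pow, add_pow]
    refine (sum_le_sum hmoments).trans_eq (sum_congr rfl fun i _ => by ring)
  have hshift := succ_natCast_mul n p (fun k => (k : ℝ) ^ e)
  push_cast at hshift
  have hX : (0 : ℝ) ≤ n * p + e + 1 := by positivity
  calc binomialMean (n + 1) p (fun k => (k : ℝ) ^ (e + 1))
      = (n + 1) * p * binomialMean n p (fun j => ((j : ℝ) + 1) ^ e) := by
        simp only [pow_succ' _ e, hshift]
    _ ≤ (n + 1) * p * (n * p + e + 1) ^ e := by gcongr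
    _ ≤ ((n + 1) * p + (e + 1)) * ((n + 1) * p + (e + 1)) ^ e :=
        mul_le_mul (by linarith) (pow_le_pow_left₀ hX (by linarith) e) (by positivity)
          (by positivity)
    _ = (((n + 1 : ℕ) : ℝ) * p + ((e + 1 : ℕ) : ℝ)) ^ (e + 1) := by
        push_cast
        ring

end binomialMean

theorem binomial_moment_bound_general (n d : ℕ) (p : ℝ)
    (hp0 : 0 ≤ p) :
    ∑ k ∈ Finset.range (n + 1),
        (n.choose k : ℝ) * p ^ k * (1 - p) ^ (n - k) * (k : ℝ) ^ d
      ≤ ((n : ℝ) * p + (d : ℝ)) ^ d :=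
  binomialMean.pow_le hp0 d n

/-- **`d`-th moment bound for the binomial distribution.** For every `n`,
every `d ≥ 1`, and every real `0 ≤ p ≤ 1`,
`Σ_{k=0}^{n} C(n,k)·p^k·(1−p)^(n−k)·k^d ≤ (n·p + d)^d`. -/
theorem binomial_moment_bound (n d : ℕ) (hd : 1 ≤ d) (p : ℝ)
    (hp0 : 0 ≤ p) (hp1 : p ≤ 1) :
    ∑ k ∈ Finset.range (n + 1),
        (n.choose k : ℝ) * p ^ k * (1 - p) ^ (n - k) * (k : ℝ) ^ d
      ≤ ((n : ℝ) * p + (d : ℝ)) ^ d :=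
  binomial_moment_bound_general n d p hp0
end

section
/- Counting tuples with a prescribed number of distinct coordinates. For all natural numbers n, d and every k with 0 ≤ k ≤ d, the number of tuples (i_1, i_2, …, i_d) ∈ {1, …, n}^d such that the set {i_1, i_2, …, i_d} has exactly d−k elements is at most C(d,k)·d^k·n^{d−k}. -/
/-!
Send each position `i` to the first position `j ≤ i` carrying the same value. The positions
that are not first occurrences form a set `S`, and `#S = d - #(image f)`. A tuple is then
determined by `S`, the first-occurrence pointer on `S` and its values off `S`, so there are at
most `C(d, k)` choices of `S`, `d ^ k` pointers and `n ^ (d - k)` values.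
-/

open Finset Fintype

namespace Function

variable {α β : Type*} [Fintype α] [LinearOrder α] [DecidableEq β]

noncomputable def firstOccurrence (f : α → β) (i : α) : α :=
  ({j | f j = f i} : Finset α).min' ⟨i, by simp⟩

lemma apply_firstOccurrence (f : α → β) (i : α) : f (firstOccurrence f i) = f i :=
  (mem_filter.mp (min'_mem ({j | f j = f i} : Finset α) _)).2

lemma firstOccurrence_eq_of_apply_eq (f : α → β) {i i' : α} (h : f i = f i') :
    firstOccurrence f i = firstOccurrence f i' := by
  simp only [firstOccurrence, h]

lemma firstOccurrence_firstOccurrence (f : α → β) (i : α) :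
    firstOccurrence f (firstOccurrence f i) = firstOccurrence f i :=
  firstOccurrence_eq_of_apply_eq f (apply_firstOccurrence f i)

noncomputable def repeatedPositions (f : α → β) : Finset α :=
  {i | firstOccurrence f i ≠ i}

lemma card_compl_repeatedPositions (f : α → β) :
    #(repeatedPositions f)ᶜ = #(univ.image f) := by
  have hcompl : (repeatedPositions f)ᶜ = ({i | firstOccurrence f i = i} : Finset α) := by
    ext i; simp [repeatedPositions]
  have himage : ({i | firstOccurrence f i = i} : Finset α).image f = univ.image f := by
    ext b
    simp only [mem_image, mem_filter, mem_univ, true_and]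
    exact ⟨fun ⟨i, _, hi⟩ => ⟨i, hi⟩, fun ⟨i, hi⟩ => ⟨firstOccurrence f i,
      firstOccurrence_firstOccurrence f i, (apply_firstOccurrence f i).trans hi⟩⟩
  rw [hcompl, ← himage, card_image_of_injOn]
  intro i hi i' hi' h
  simp only [coe_filter, mem_univ, true_and] at hi hi'
  rw [← hi, ← hi', firstOccurrence_eq_of_apply_eq f h]

lemma card_repeatedPositions (f : α → β) :
    #(repeatedPositions f) = card α - #(univ.image f) := by
  rw [← card_compl_repeatedPositions, card_compl, Nat.sub_sub_self (card_le_univ _)]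

lemma eq_of_firstOccurrence_eq_of_eqOn_compl {f g : α → β} {S : Finset α}
    (hf : repeatedPositions f = S)
    (hfirst : ∀ i ∈ S, firstOccurrence f i = firstOccurrence g i)
    (hvalue : ∀ i ∉ S, f i = g i) : f = g := by
  funext i
  by_cases hi : i ∈ S
  · have hfirst_notMem : firstOccurrence f i ∉ S := by
      simp [← hf, repeatedPositions, firstOccurrence_firstOccurrence]
    calc f i = f (firstOccurrence f i) := (apply_firstOccurrence f i).symm
      _ = g (firstOccurrence f i) := hvalue _ hfirst_notMem
      _ = g (firstOccurrence g i) := by rw [hfirst i hi]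
      _ = g i := apply_firstOccurrence g i
  · exact hvalue i hi

variable [Fintype β]

lemma card_filter_repeatedPositions_eq_le (S : Finset α) :
    #{f : α → β | repeatedPositions f = S} ≤ card α ^ #S * card β ^ (card α - #S) := by
  let encode : (α → β) → (S → α) × ((Sᶜ : Finset α) → β) :=
    fun f => (fun i => firstOccurrence f i, fun i => f i)
  have hinj : Set.InjOn encode ({f : α → β | repeatedPositions f = S} : Finset _) := by
    intro f hf g _ hfg
    simp only [coe_filter, mem_univ, true_and, Set.mem_ofPred_eq] at hf
    simp only [encode, Prod.mk.injEq, funext_iff, Subtype.forall, mem_compl] at hfg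
    exact eq_of_firstOccurrence_eq_of_eqOn_compl hf hfg.1 hfg.2
  calc #{f : α → β | repeatedPositions f = S}
      ≤ #(univ : Finset ((S → α) × ((Sᶜ : Finset α) → β))) :=
        card_le_card_of_injOn encode (fun _ _ => mem_univ _) hinj
    _ = card α ^ #S * card β ^ (card α - #S) := by
        simp only [card_univ, card_prod, card_fun, card_coe, card_compl]

theorem card_filter_card_image_eq_sub_le {k : ℕ} (hk : k ≤ card α) :
    #{f : α → β | #(univ.image f) = card α - k}
      ≤ (card α).choose k * card α ^ k * card β ^ (card α - k) := by
  have hmaps : ∀ f ∈ ({f : α → β | #(univ.image f) = card α - k} : Finset _),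
      repeatedPositions f ∈ powersetCard k (univ : Finset α) := by
    intro f hf
    rw [mem_filter] at hf
    rw [mem_powersetCard, card_repeatedPositions, hf.2]
    exact ⟨subset_univ _, by omega⟩
  have hfiber : ∀ S ∈ powersetCard k (univ : Finset α),
      #{f ∈ ({f : α → β | #(univ.image f) = card α - k} : Finset _) | repeatedPositions f = S}
        ≤ card α ^ k * card β ^ (card α - k) := by
    intro S hS
    rw [(mem_powersetCard.mp hS).2.symm]
    exact (card_le_card (filter_subset_filter _ (subset_univ _))).trans
      (card_filter_repeatedPositions_eq_le S)
  calc _ ≤ card α ^ k * card β ^ (card α - k) * #(powersetCard k (univ : Finset α)) :=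
        card_le_mul_card_image_of_maps_to hmaps _ hfiber
    _ = _ := by rw [card_powersetCard, card_univ]; ring

end Function

/-- **Counting tuples with a prescribed number of distinct coordinates.** For
all naturals `n, d` and every `k ≤ d`, the number of tuples
`(i₁, …, i_d) ∈ {1, …, n}^d` whose set of entries has exactly `d − k` elements
is at most `C(d,k)·d^k·n^(d−k)`. -/
theorem count_tuples_distinct_coords (n d k : ℕ) (hk : k ≤ d) :
    (Finset.univ.filter (fun f : Fin d → Fin n =>
        (Finset.univ.image f).card = d - k)).card
      ≤ d.choose k * d ^ k * n ^ (d - k) := by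
  simpa using Function.card_filter_card_image_eq_sub_le (α := Fin d) (β := Fin n)
    (k := k) (by simpa using hk)
end
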